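/- arXiv:2211.01418 — 4 statements merged into one kernel-verified Lean document; each statement's English description precedes it below -/
import Mathlib

section
/- Let ĥ be convex with ĥ ≤ h, ĥ(x^k) = h(x^k), ρ > 0, and let x^{k+1} minimize ĥ(x) + (ρ/2)‖x − x^k‖². Then for any minimizer x⋆ of h with value h⋆: ‖x^{k+1} − x⋆‖² ≤ ‖x^k − x⋆‖² + (2/ρ)(h⋆ − h(x^k) + δ^k), where δ^k = h(x^k) − (ĥ(x^{k+1}) + (ρ/2)‖x^{k+1} − x^k‖²). -/
theorem prox_step_distance_recursion {n : ℕ}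
    (h hhat : EuclideanSpace ℝ (Fin n) → ℝ)
    (hconv : ConvexOn ℝ Set.univ hhat)
    (hle : ∀ x, hhat x ≤ h x)
    (xk : EuclideanSpace ℝ (Fin n)) (htight : hhat xk = h xk)
    (ρ : ℝ) (hρ : 0 < ρ)
    (x1 : EuclideanSpace ℝ (Fin n))
    (hmin : ∀ x, hhat x1 + (ρ/2) * ‖x1 - xk‖^2 ≤ hhat x + (ρ/2) * ‖x - xk‖^2)
    (xstar : EuclideanSpace ℝ (Fin n)) (hstar : ∀ x, h xstar ≤ h x) :
    ‖x1 - xstar‖^2 ≤ ‖xk - xstar‖^2 +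
      (2/ρ) * (h xstar - h xk + (h xk - (hhat x1 + (ρ/2) * ‖x1 - xk‖^2))) := by
  set A : ℝ := inner ℝ (x1 - xk) (xstar - x1) with hA
  set B : ℝ := ‖xstar - x1‖^2 with hB
  have hBnn : 0 ≤ B := by positivity
  -- key step: for all t ∈ (0,1], hhat xstar - hhat x1 ≥ -ρ*A - (ρ*t/2)*B
  have key : ∀ t : ℝ, 0 < t → t ≤ 1 →
      -ρ * A - (ρ * t / 2) * B ≤ hhat xstar - hhat x1 := by
    intro t ht ht1
    have hconvt := hconv.2 (Set.mem_univ x1) (Set.mem_univ xstar)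
      (by linarith : (0:ℝ) ≤ 1 - t) (le_of_lt ht) (by ring)
    have hmt := hmin ((1 - t) • x1 + t • xstar)
    have heq : (1 - t) • x1 + t • xstar - xk = (x1 - xk) + t • (xstar - x1) := by
      module
    have hnorm : ‖(1 - t) • x1 + t • xstar - xk‖^2
        = ‖x1 - xk‖^2 + 2 * (t * A) + t^2 * B := by
      rw [heq, @norm_add_sq_real, real_inner_smul_right, norm_smul, mul_pow]
      simp [hA, hB, abs_of_pos ht]
    rw [hnorm] at hmt
    have h2 : hhat ((1 - t) • x1 + t • xstar) ≤ (1 - t) * hhat x1 + t * hhat xstar := hconvt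
    have h3 : hhat x1 ≤ (1 - t) * hhat x1 + t * hhat xstar +
        (ρ/2) * (2 * (t * A) + t^2 * B) := by nlinarith
    have h4 : 0 ≤ t * (hhat xstar - hhat x1) + ρ * (t * A) + (ρ/2) * t^2 * B := by
      nlinarith
    have := mul_le_mul_of_nonneg_left
      (le_refl (0:ℝ)) (le_of_lt (inv_pos.mpr ht))
    nlinarith [mul_pos ht ht]
  -- pass to the limit: hhat xstar - hhat x1 ≥ -ρ*A
  have hsub : -ρ * A ≤ hhat xstar - hhat x1 := by
    by_contra hcon
    push_neg at hcon
    set ε := -ρ * A - (hhat xstar - hhat x1) with hε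
    have hεpos : 0 < ε := by simp [hε]; linarith
    have hden : 0 < ρ * B / 2 + 1 := by positivity
    set t := min 1 (ε / (ρ * B / 2 + 1)) with htdef
    have htpos : 0 < t := lt_min one_pos (by positivity)
    have ht1 : t ≤ 1 := min_le_left _ _
    have hk := key t htpos ht1
    have htle : t ≤ ε / (ρ * B / 2 + 1) := min_le_right _ _
    have : (ρ * t / 2) * B < ε := by
      have h1 : (ρ * t / 2) * B ≤ t * (ρ * B / 2 + 1) - t := by nlinarith
      have h2 : t * (ρ * B / 2 + 1) ≤ ε := by
        rw [← le_div_iff₀ hden] at *; linarith [htle]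
      linarith
    linarith [hk]
  -- norm identity
  have hid : ‖x1 - xstar‖^2 = ‖xk - xstar‖^2 - ‖x1 - xk‖^2 - 2 * A := by
    have e1 : xk - xstar = (x1 - xstar) - (x1 - xk) := by abel
    have e2 : (inner ℝ (x1 - xstar) (x1 - xk) : ℝ) = -A := by
      rw [hA, show xstar - x1 = -(x1 - xstar) from by abel, inner_neg_right,
        real_inner_comm, neg_neg]
    have e3 : ‖xk - xstar‖^2 = ‖x1 - xstar‖^2 - 2 * (inner ℝ (x1 - xstar) (x1 - xk) : ℝ)
        + ‖x1 - xk‖^2 := by rw [e1]; exact norm_sub_sq_real _ _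
    rw [e2] at e3; linarith
  have hstar' : hhat xstar ≤ h xstar := hle xstar
  rw [hid]
  have hfin : -2 * A ≤ (2/ρ) * (h xstar - hhat x1) := by
    rw [div_mul_eq_mul_div, le_div_iff₀ hρ]
    nlinarith
  have expand : (2/ρ) * (h xstar - h xk + (h xk - (hhat x1 + (ρ/2) * ‖x1 - xk‖^2)))
      = (2/ρ) * (h xstar - hhat x1) - ‖x1 - xk‖^2 := by
    field_simp
    ring
  rw [expand]
  linarith
end

section
/- Suppose after some iteration p no further steps are accepted, so x^k = x^p for all k ≥ p, and the minorants satisfy ĥ^{k+1} ≥ ĥ^k at the new tentative points with ĥ^{k+1}(x̃^{k+2}) ≥ ĥ^k(x̃^{k+2}) and ρ(x^p − x̃^{k+1}) ∈ ∂ĥ^k(x̃^{k+1}). Then δ^k − δ^{k+1} ≥ (ρ/2)‖x̃^{k+2} − x̃^{k+1}‖², so the sequence (δ^k)_{k ≥ p+1} is nonincreasing. -/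
open scoped RealInnerProductSpace

theorem null_step_delta_decrease {n : ℕ}
    (ρ : ℝ) (hρ : 0 < ρ) (xp : EuclideanSpace ℝ (Fin n)) (hp : ℝ)
    (hhat : ℕ → EuclideanSpace ℝ (Fin n) → ℝ)
    (xt : ℕ → EuclideanSpace ℝ (Fin n))
    (hsub : ∀ k x, hhat k (xt (k+1)) + ⟪ρ • (xp - xt (k+1)), x - xt (k+1)⟫ ≤ hhat k x)
    (hmono : ∀ k, hhat k (xt (k+2)) ≤ hhat (k+1) (xt (k+2))) :
    ∀ k, (hp - (hhat (k+1) (xt (k+2)) + (ρ/2) * ‖xt (k+2) - xp‖^2))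
        + (ρ/2) * ‖xt (k+2) - xt (k+1)‖^2
      ≤ hp - (hhat k (xt (k+1)) + (ρ/2) * ‖xt (k+1) - xp‖^2) := by
  intro k
  have h1 := hsub k (xt (k+2))
  have h2 := hmono k
  have key : xt (k+2) - xp = (xt (k+1) - xp) + (xt (k+2) - xt (k+1)) := by abel
  have hn : ‖xt (k+2) - xp‖^2 = ‖xt (k+1) - xp‖^2
      + 2*⟪xt (k+1) - xp, xt (k+2) - xt (k+1)⟫ + ‖xt (k+2) - xt (k+1)‖^2 := by
    rw [key, @norm_add_sq_real]
  have hi : ⟪ρ • (xp - xt (k+1)), xt (k+2) - xt (k+1)⟫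
      = -ρ * ⟪xt (k+1) - xp, xt (k+2) - xt (k+1)⟫ := by
    rw [real_inner_smul_left]
    have h3 : xp - xt (k+1) = -(xt (k+1) - xp) := by abel
    rw [h3, inner_neg_left]; ring
  rw [hi] at h1
  nlinarith [h1, h2, hn]
end

section
/- In the null-step regime (x^k = x^p for all k ≥ p), the tentative iterates stay close to x^p: ‖x^p − x̃^{k+1}‖² ≤ 2δ^k/ρ. -/
open scoped RealInnerProductSpace

theorem null_step_iterates_close {n : ℕ}
    (ρ : ℝ) (hρ : 0 < ρ) (xp xt : EuclideanSpace ℝ (Fin n))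
    (hhat : EuclideanSpace ℝ (Fin n) → ℝ) (hp : ℝ)
    (hle : hhat xp ≤ hp)
    (hsub : ∀ x, hhat xt + ⟪ρ • (xp - xt), x - xt⟫ ≤ hhat x) :
    ‖xp - xt‖^2 ≤ 2 * (hp - (hhat xt + (ρ/2) * ‖xt - xp‖^2)) / ρ := by
  have h := hsub xp
  rw [real_inner_smul_left, real_inner_self_eq_norm_sq] at h
  have key : ρ * ‖xp - xt‖^2 ≤ hp - hhat xt := by linarith
  have hnorm : ‖xt - xp‖ = ‖xp - xt‖ := norm_sub_rev _ _
  rw [hnorm, le_div_iff₀ hρ]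
  nlinarith [sq_nonneg ‖xp - xt‖]
end

section
/- Let h : ℝ^n → ℝ ∪ {∞} be closed convex with minimizer x⋆, and suppose for a point x^p there exist convex functions ĥ^k ≤ h and points x̃^{k+1} with ρ(x^p − x̃^{k+1}) ∈ ∂ĥ^k(x̃^{k+1}), x̃^{k+1} → x^p, and ĥ^k(x̃^{k+1}) → h(x^p). If each ĥ^k is 2L-Lipschitz on dom g and h is lower semicontinuous, then 0 ∈ ∂h(x^p), hence h(x^p) = h⋆. -/
open scoped RealInnerProductSpace

theorem null_step_limit_optimal {n : ℕ}
    (h : EuclideanSpace ℝ (Fin n) → EReal) (L : NNReal) (ρ : ℝ) (hρ : 0 < ρ)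
    (hconv : ∀ x y : EuclideanSpace ℝ (Fin n), ∀ θ : ℝ, 0 ≤ θ → θ ≤ 1 →
      h (θ • x + (1-θ) • y) ≤ (θ : EReal) * h x + ((1-θ : ℝ) : EReal) * h y)
    (hlsc : LowerSemicontinuous h)
    (xstar : EuclideanSpace ℝ (Fin n)) (hmin : ∀ x, h xstar ≤ h x)
    (xp : EuclideanSpace ℝ (Fin n)) (hp : ℝ) (hxp : h xp = (hp : EReal))
    (hhat : ℕ → EuclideanSpace ℝ (Fin n) → ℝ)
    (hhconv : ∀ k, ConvexOn ℝ Set.univ (hhat k))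
    (hhle : ∀ k x, ((hhat k x : ℝ) : EReal) ≤ h x)
    (hlip : ∀ k, LipschitzWith (2 * L) (hhat k))
    (xt : ℕ → EuclideanSpace ℝ (Fin n))
    (hsub : ∀ k x, hhat k (xt (k+1)) + ⟪ρ • (xp - xt (k+1)), x - xt (k+1)⟫ ≤ hhat k x)
    (hxt : Filter.Tendsto (fun k => xt (k+1)) Filter.atTop (nhds xp))
    (hval : Filter.Tendsto (fun k => hhat k (xt (k+1))) Filter.atTop (nhds hp)) :
    (∀ y, h xp ≤ h y) ∧ h xp = h xstar := by
  have key : ∀ y, (hp : EReal) ≤ h y := by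
    intro y
    have h2 : Filter.Tendsto (fun k => ρ • (xp - xt (k+1))) Filter.atTop (nhds 0) := by
      have hs : Filter.Tendsto (fun k => xp - xt (k+1)) Filter.atTop (nhds (xp - xp)) :=
        Filter.Tendsto.sub tendsto_const_nhds hxt
      simpa using hs.const_smul ρ
    have h3 : Filter.Tendsto (fun k => y - xt (k+1)) Filter.atTop (nhds (y - xp)) :=
      Filter.Tendsto.sub tendsto_const_nhds hxt
    have h1 : Filter.Tendsto
        (fun k => ⟪ρ • (xp - xt (k+1)), y - xt (k+1)⟫) Filter.atTop (nhds 0) := by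
      simpa using h2.inner h3
    have ha : Filter.Tendsto
        (fun k => hhat k (xt (k+1)) + ⟪ρ • (xp - xt (k+1)), y - xt (k+1)⟫)
        Filter.atTop (nhds hp) := by
      simpa using hval.add h1
    have hle : ∀ k, ((hhat k (xt (k+1)) + ⟪ρ • (xp - xt (k+1)), y - xt (k+1)⟫ : ℝ) : EReal) ≤ h y :=
      fun k => le_trans (EReal.coe_le_coe_iff.mpr (hsub k y)) (hhle k y)
    exact le_of_tendsto' (EReal.tendsto_coe.mpr ha) hle
  exact ⟨fun y => hxp ▸ key y, le_antisymm (hxp ▸ key xstar) (hmin xp)⟩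
end
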